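/- Let f(x₁,x₂,x₃) be a cubic polynomial with no x₁³ term, no x₁² term, no x₁x₂ or x₁x₃ terms, and no constant or linear terms, and let a₄, a₅ be the coefficients of x₁²x₂ and x₁²x₃, so that f = a₄x₁²x₂ + a₅x₁²x₃ + (remaining cubic and quadratic terms). Define u = (2|∇f|²Δf − ⟨∇|∇f|², ∇f⟩)² − 16|∇f|⁶. Then the coefficient of x₁¹² in the single-variable polynomial p₁(x₁) = u(x₁, 0, 0) equals −16(a₄² + a₅²)³. Consequently, if p₁ ≡ 0 then a₄ = 0 and a₅ = 0. -/
import Mathlib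


open MvPolynomial

/-- `|∇f|²` as a polynomial. -/
noncomputable def gradNormSq (f : MvPolynomial (Fin 3) ℝ) : MvPolynomial (Fin 3) ℝ :=
  ∑ i, (pderiv i f) ^ 2

/-- `Δf` as a polynomial. -/
noncomputable def lapPoly (f : MvPolynomial (Fin 3) ℝ) : MvPolynomial (Fin 3) ℝ :=
  ∑ i, pderiv i (pderiv i f)

/-- `⟨∇|∇f|², ∇f⟩` as a polynomial. -/
noncomputable def innerPoly (f : MvPolynomial (Fin 3) ℝ) : MvPolynomial (Fin 3) ℝ :=
  ∑ i, pderiv i (gradNormSq f) * pderiv i f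

/-- `u = (2|∇f|²Δf − ⟨∇|∇f|²,∇f⟩)² − 16|∇f|⁶` as a polynomial (here `n = 3`, so
`4(n−1)² = 16`, corresponding to mean curvature `1`). -/
noncomputable def uPoly (f : MvPolynomial (Fin 3) ℝ) : MvPolynomial (Fin 3) ℝ :=
  (2 * gradNormSq f * lapPoly f - innerPoly f) ^ 2 - 16 * (gradNormSq f) ^ 3

noncomputable def fcub (a₂ a₃ a₄ a₅ a₆ a₇ a₈ a₉ a₁₀ b₂ b₃ b₆ : ℝ) : MvPolynomial (Fin 3) ℝ :=
  C a₂ * X 1 ^ 3 + C a₃ * X 2 ^ 3 + C a₄ * X 0 ^ 2 * X 1 +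
    C a₅ * X 0 ^ 2 * X 2 + C a₆ * X 1 ^ 2 * X 0 + C a₇ * X 1 ^ 2 * X 2 +
    C a₈ * X 2 ^ 2 * X 0 + C a₉ * X 2 ^ 2 * X 1 + C a₁₀ * X 0 * X 1 * X 2 +
    C b₂ * X 1 ^ 2 + C b₃ * X 2 ^ 2 + C b₆ * X 1 * X 2


noncomputable def σp : Fin 3 → Polynomial ℝ := fun i : Fin 3 => if i = 0 then (Polynomial.X : Polynomial ℝ) else 0

set_option maxHeartbeats 2000000 in
lemma key (a₂ a₃ a₄ a₅ a₆ a₇ a₈ a₉ a₁₀ b₂ b₃ b₆ : ℝ) :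
    aeval σp (uPoly (fcub a₂ a₃ a₄ a₅ a₆ a₇ a₈ a₉ a₁₀ b₂ b₃ b₆)) =
      Polynomial.C ((4*(a₄^2+a₅^2)*(b₂+b₃) - (4*b₂*a₄^2 + 4*b₆*a₄*a₅ + 4*b₃*a₅^2))^2) * Polynomial.X^8
      + Polynomial.C (2*(4*(a₄^2+a₅^2)*(b₂+b₃) - (4*b₂*a₄^2 + 4*b₆*a₄*a₅ + 4*b₃*a₅^2))*(4*(a₄^2+a₅^2)*(a₆+a₈) - (4*a₆*a₄^2 + 4*a₁₀*a₄*a₅ + 4*a₈*a₅^2))) * Polynomial.X^9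
      + Polynomial.C ((4*(a₄^2+a₅^2)*(a₆+a₈) - (4*a₆*a₄^2 + 4*a₁₀*a₄*a₅ + 4*a₈*a₅^2))^2) * Polynomial.X^10
      - Polynomial.C (16*(a₄^2+a₅^2)^3) * Polynomial.X^12 := by
  have e0 : aeval σp (pderiv (0:Fin 3) (fcub a₂ a₃ a₄ a₅ a₆ a₇ a₈ a₉ a₁₀ b₂ b₃ b₆)) = 0 := by
    simp [fcub, σp, pderiv_X, Pi.single_apply]
  have e1 : aeval σp (pderiv (1:Fin 3) (fcub a₂ a₃ a₄ a₅ a₆ a₇ a₈ a₉ a₁₀ b₂ b₃ b₆)) = Polynomial.C a₄ * Polynomial.X^2 := by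
    simp [fcub, σp, pderiv_X, Pi.single_apply]
  have e2 : aeval σp (pderiv (2:Fin 3) (fcub a₂ a₃ a₄ a₅ a₆ a₇ a₈ a₉ a₁₀ b₂ b₃ b₆)) = Polynomial.C a₅ * Polynomial.X^2 := by
    simp [fcub, σp, pderiv_X, Pi.single_apply]
  have e00 : aeval σp (pderiv (0:Fin 3) (pderiv (0:Fin 3) (fcub a₂ a₃ a₄ a₅ a₆ a₇ a₈ a₉ a₁₀ b₂ b₃ b₆))) = 0 := by
    simp [fcub, σp, pderiv_X, Pi.single_apply]
  have e10 : aeval σp (pderiv (1:Fin 3) (pderiv (0:Fin 3) (fcub a₂ a₃ a₄ a₅ a₆ a₇ a₈ a₉ a₁₀ b₂ b₃ b₆))) = (2:Polynomial ℝ) * Polynomial.C a₄ * Polynomial.X := by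
    simp [fcub, σp, pderiv_X, Pi.single_apply]; ring
  have e20 : aeval σp (pderiv (2:Fin 3) (pderiv (0:Fin 3) (fcub a₂ a₃ a₄ a₅ a₆ a₇ a₈ a₉ a₁₀ b₂ b₃ b₆))) = (2:Polynomial ℝ) * Polynomial.C a₅ * Polynomial.X := by
    simp [fcub, σp, pderiv_X, Pi.single_apply]; ring
  have e01 : aeval σp (pderiv (0:Fin 3) (pderiv (1:Fin 3) (fcub a₂ a₃ a₄ a₅ a₆ a₇ a₈ a₉ a₁₀ b₂ b₃ b₆))) = (2:Polynomial ℝ) * Polynomial.C a₄ * Polynomial.X := by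
    simp [fcub, σp, pderiv_X, Pi.single_apply]; ring
  have e11 : aeval σp (pderiv (1:Fin 3) (pderiv (1:Fin 3) (fcub a₂ a₃ a₄ a₅ a₆ a₇ a₈ a₉ a₁₀ b₂ b₃ b₆))) = (2:Polynomial ℝ) * Polynomial.C b₂ + (2:Polynomial ℝ) * Polynomial.C a₆ * Polynomial.X := by
    simp [fcub, σp, pderiv_X, Pi.single_apply]; ring
  have e21 : aeval σp (pderiv (2:Fin 3) (pderiv (1:Fin 3) (fcub a₂ a₃ a₄ a₅ a₆ a₇ a₈ a₉ a₁₀ b₂ b₃ b₆))) = Polynomial.C b₆ + Polynomial.C a₁₀ * Polynomial.X := by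
    simp [fcub, σp, pderiv_X, Pi.single_apply]; ring
  have e02 : aeval σp (pderiv (0:Fin 3) (pderiv (2:Fin 3) (fcub a₂ a₃ a₄ a₅ a₆ a₇ a₈ a₉ a₁₀ b₂ b₃ b₆))) = (2:Polynomial ℝ) * Polynomial.C a₅ * Polynomial.X := by
    simp [fcub, σp, pderiv_X, Pi.single_apply]; ring
  have e12 : aeval σp (pderiv (1:Fin 3) (pderiv (2:Fin 3) (fcub a₂ a₃ a₄ a₅ a₆ a₇ a₈ a₉ a₁₀ b₂ b₃ b₆))) = Polynomial.C b₆ + Polynomial.C a₁₀ * Polynomial.X := by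
    simp [fcub, σp, pderiv_X, Pi.single_apply]; ring
  have e22 : aeval σp (pderiv (2:Fin 3) (pderiv (2:Fin 3) (fcub a₂ a₃ a₄ a₅ a₆ a₇ a₈ a₉ a₁₀ b₂ b₃ b₆))) = (2:Polynomial ℝ) * Polynomial.C b₃ + (2:Polynomial ℝ) * Polynomial.C a₈ * Polynomial.X := by
    simp [fcub, σp, pderiv_X, Pi.single_apply]; ring
  have hsq : ∀ (i : Fin 3) (g : MvPolynomial (Fin 3) ℝ), pderiv i (g^2) = 2 * g * pderiv i g := by
    intro i g; rw [sq, Derivation.leibniz]; simp only [smul_eq_mul]; ring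
  simp only [uPoly, gradNormSq, lapPoly, innerPoly, Fin.sum_univ_three, hsq, map_add, map_sub,
    map_mul, map_pow, map_ofNat, e0, e1, e2, e00, e10, e20, e01, e11, e21, e02, e12, e22,
    Polynomial.C_mul, Polynomial.C_add, Polynomial.C_sub, Polynomial.C_pow]
  ring

/-- for the cubic
`f = a₂x₂³+a₃x₃³+a₄x₁²x₂+a₅x₁²x₃+a₆x₂²x₁+a₇x₂²x₃+a₈x₃²x₁+a₉x₃²x₂+a₁₀x₁x₂x₃
   +b₂x₂²+b₃x₃²+b₆x₂x₃`
(no `x₁³`, `x₁²`, `x₁x₂`, `x₁x₃`, constant, or linear terms), the coefficient of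
`x₁¹²` in `p₁(x₁) = u(x₁,0,0)` equals `−16(a₄²+a₅²)³`; consequently `p₁ ≡ 0` forces
`a₄ = 0` and `a₅ = 0`. Here `X 0, X 1, X 2` stand for `x₁, x₂, x₃`. -/
theorem coeff_twelve_restriction (a₂ a₃ a₄ a₅ a₆ a₇ a₈ a₉ a₁₀ b₂ b₃ b₆ : ℝ) :
    letI f : MvPolynomial (Fin 3) ℝ :=
      C a₂ * X 1 ^ 3 + C a₃ * X 2 ^ 3 + C a₄ * X 0 ^ 2 * X 1 +
        C a₅ * X 0 ^ 2 * X 2 + C a₆ * X 1 ^ 2 * X 0 + C a₇ * X 1 ^ 2 * X 2 +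
        C a₈ * X 2 ^ 2 * X 0 + C a₉ * X 2 ^ 2 * X 1 + C a₁₀ * X 0 * X 1 * X 2 +
        C b₂ * X 1 ^ 2 + C b₃ * X 2 ^ 2 + C b₆ * X 1 * X 2
    letI p₁ : Polynomial ℝ :=
      aeval (fun i : Fin 3 => if i = 0 then (Polynomial.X : Polynomial ℝ) else 0)
        (uPoly f)
    p₁.coeff 12 = -16 * (a₄ ^ 2 + a₅ ^ 2) ^ 3 ∧ (p₁ = 0 → a₄ = 0 ∧ a₅ = 0) := by
  have hp : aeval (fun i : Fin 3 => if i = 0 then (Polynomial.X : Polynomial ℝ) else 0)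
      (uPoly (C a₂ * X 1 ^ 3 + C a₃ * X 2 ^ 3 + C a₄ * X 0 ^ 2 * X 1 +
        C a₅ * X 0 ^ 2 * X 2 + C a₆ * X 1 ^ 2 * X 0 + C a₇ * X 1 ^ 2 * X 2 +
        C a₈ * X 2 ^ 2 * X 0 + C a₉ * X 2 ^ 2 * X 1 + C a₁₀ * X 0 * X 1 * X 2 +
        C b₂ * X 1 ^ 2 + C b₃ * X 2 ^ 2 + C b₆ * X 1 * X 2)) =
      Polynomial.C ((4*(a₄^2+a₅^2)*(b₂+b₃) - (4*b₂*a₄^2 + 4*b₆*a₄*a₅ + 4*b₃*a₅^2))^2) * Polynomial.X^8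
      + Polynomial.C (2*(4*(a₄^2+a₅^2)*(b₂+b₃) - (4*b₂*a₄^2 + 4*b₆*a₄*a₅ + 4*b₃*a₅^2))*(4*(a₄^2+a₅^2)*(a₆+a₈) - (4*a₆*a₄^2 + 4*a₁₀*a₄*a₅ + 4*a₈*a₅^2))) * Polynomial.X^9
      + Polynomial.C ((4*(a₄^2+a₅^2)*(a₆+a₈) - (4*a₆*a₄^2 + 4*a₁₀*a₄*a₅ + 4*a₈*a₅^2))^2) * Polynomial.X^10
      - Polynomial.C (16*(a₄^2+a₅^2)^3) * Polynomial.X^12 :=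
    key a₂ a₃ a₄ a₅ a₆ a₇ a₈ a₉ a₁₀ b₂ b₃ b₆
  rw [hp]
  constructor
  · simp only [Polynomial.coeff_add, Polynomial.coeff_sub, Polynomial.coeff_C_mul,
      Polynomial.coeff_X_pow]
    norm_num
  · intro h
    have h12 := congrArg (fun q : Polynomial ℝ => q.coeff 12) h
    simp only [Polynomial.coeff_add, Polynomial.coeff_sub, Polynomial.coeff_C_mul,
      Polynomial.coeff_X_pow, Polynomial.coeff_zero] at h12
    norm_num at h12
    constructor <;> nlinarith [sq_nonneg a₄, sq_nonneg a₅, sq_nonneg (a₄^2+a₅^2), sq_nonneg (a₄*a₅)]
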